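/- For any distance-based k-committee voting rule g with issue-wise inter-committee vote and any number of voters n, the supremum over m of AR_{n,m}(g) is at least AR_{n,1}(k-sortition); moreover this already holds with m = n! issues. -/

import Mathlib

open Finset BigOperators

noncomputable section

/-- Hamming distance between two preference vectors over `m` binary issues. -/
def hamming {m : ℕ} (x y : Fin m → Bool) : ℕ :=
  (Finset.univ.filter fun j => x j ≠ y j).card

/-- Social cost of outcome `z` on profile `X`: sum of Hamming distances. -/
def SC {n m : ℕ} (X : Fin n → Fin m → Bool) (z : Fin m → Bool) : ℕ :=
  ∑ i, hamming (X i) z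

/-- Optimal (minimal) social cost over all outcomes. -/
def optCost {n m : ℕ} (X : Fin n → Fin m → Bool) : ℕ :=
  Finset.univ.inf' Finset.univ_nonempty fun z : Fin m → Bool => SC X z

/-- Number of voters preferring alternative 1 (`true`) on issue `j`. -/
def trueCount {n m : ℕ} (X : Fin n → Fin m → Bool) (j : Fin m) : ℕ :=
  (Finset.univ.filter fun i => X i j = true).card

/-- Number of voters preferring alternative 0 (`false`) on issue `j`. -/
def falseCount {n m : ℕ} (X : Fin n → Fin m → Bool) (j : Fin m) : ℕ :=
  (Finset.univ.filter fun i => X i j = false).card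

/-- Expected social cost of `k`-sortition: a uniformly random committee of size `k`
decides each issue by simple majority, ties broken uniformly at random. -/
def sortitionCost (k : ℕ) {n m : ℕ} (X : Fin n → Fin m → Bool) : ℝ :=
  (∑ C ∈ Finset.powersetCard k (Finset.univ : Finset (Fin n)), ∑ j : Fin m,
      (if k < 2 * (C.filter fun i => X i j = true).card then (falseCount X j : ℝ)
       else if 2 * (C.filter fun i => X i j = true).card < k then (trueCount X j : ℝ)
       else (n : ℝ) / 2)) / (n.choose k : ℝ)

/-- Ratio of an (expected) cost to the optimal cost, with the convention `0/0 = 1`. -/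
def ratio (cost : ℝ) (opt : ℕ) : ℝ := if opt = 0 then 1 else cost / (opt : ℝ)

/-- Worst-case approximation ratio of `k`-sortition over profiles with `n` voters, `m` issues. -/
def sortitionAR (n m k : ℕ) : ℝ :=
  ⨆ X : Fin n → Fin m → Bool, ratio (sortitionCost k X) (optCost X)

/-- The set of committee members of `C` closest (in Hamming distance) to voter `i`. -/
def closestSet {n m : ℕ} (X : Fin n → Fin m → Bool) (C : Finset (Fin n)) (i : Fin n) :
    Finset (Fin n) :=
  C.filter fun c => ∀ c' ∈ C, hamming (X i) (X c) ≤ hamming (X i) (X c')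

/-- Weight of committee member `c`: each voter splits one unit of weight equally among
their closest committee members. -/
def wWeight {n m : ℕ} (X : Fin n → Fin m → Bool) (C : Finset (Fin n)) (c : Fin n) : ℝ :=
  ∑ i : Fin n, if c ∈ closestSet X C i then 1 / ((closestSet X C i).card : ℝ) else 0

/-- Expected social cost of the decision of committee `C` under weighted majority
(per issue, ties broken uniformly). -/
def wCost {n m : ℕ} (X : Fin n → Fin m → Bool) (C : Finset (Fin n)) : ℝ :=
  ∑ j : Fin m,
    (if (∑ c ∈ C.filter (fun c => X c j = false), wWeight X C c)
          < (∑ c ∈ C.filter (fun c => X c j = true), wWeight X C c)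
        then (falseCount X j : ℝ)
     else if (∑ c ∈ C.filter (fun c => X c j = true), wWeight X C c)
          < (∑ c ∈ C.filter (fun c => X c j = false), wWeight X C c)
        then (trueCount X j : ℝ)
     else (n : ℝ) / 2)

/-- Expected social cost of weighted `k`-sortition: uniformly random committee of size `k`,
weighted majority vote per issue. -/
def wSortitionCost (k : ℕ) {n m : ℕ} (X : Fin n → Fin m → Bool) : ℝ :=
  (∑ C ∈ Finset.powersetCard k (Finset.univ : Finset (Fin n)), wCost X C) / (n.choose k : ℝ)

/-- Worst-case approximation ratio of weighted `k`-sortition. -/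
def wSortitionAR (n m k : ℕ) : ℝ :=
  ⨆ X : Fin n → Fin m → Bool, ratio (wSortitionCost k X) (optCost X)


/-- Expected social cost of a `k`-committee rule given by a distribution `μ` over
committees and an issue-wise randomized inter-committee rule `h` (probability of
outcome 1 on each issue as a function of the committee members' votes on it). -/
def genCost {n m : ℕ}
    (μ : (Fin n → Fin m → Bool) → Finset (Fin n) → ℝ)
    (h : (Fin n → Fin m → Bool) → Finset (Fin n) → Fin m → (Fin n → Bool) → ℝ)
    (X : Fin n → Fin m → Bool) : ℝ :=
  ∑ C : Finset (Fin n), μ X C * ∑ j : Fin m,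
    (h X C j (fun i => X i j) * (falseCount X j : ℝ)
      + (1 - h X C j (fun i => X i j)) * (trueCount X j : ℝ))


/-!
Fix a one-issue profile with `a` voters for `true` and `b` for `false`. Over the `n!` issues,
let issue `j` carry the same votes rearranged by the `j`-th permutation composed with a
permutation `π`, and also consider the complemented profiles. All these `2 · n!` profiles have
the same Hamming distance matrix, so a distance-based rule draws its committee from the same
distribution and applies the same issue-wise votes to all of them, and each has optimal cost
`n! · min a b`. Averaged over the family, every issue shows a uniformly random rearrangement of
either the votes or their complement. Given the committee's votes, the likelihoods of the two
cases are products of falling factorials, and comparing them shows that committee majority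
minimises the sum of the two expected costs. A committee of size `k` placed by a uniformly random
permutation is a uniformly random `k`-set, so majority reproduces the cost of `k`-sortition.
Hence some profile of the family has approximation ratio at least that of `k`-sortition on the
one-issue profile.
-/

theorem card_orbit_nsmul_sum_smul_eq {G X M : Type*} [Group G] [Fintype G] [MulAction G X]
    [DecidableEq X] [AddCommMonoid M] {x : X} {O : Finset X}
    (hO : ∀ y, y ∈ O ↔ ∃ g : G, g • x = y) (f : X → M) :
    #O • ∑ g : G, f (g • x) = Fintype.card G • ∑ y ∈ O, f y := by
  have maps : ∀ g ∈ (univ : Finset G), g • x ∈ O := fun g _ => (hO _).2 ⟨g, rfl⟩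
  have fiber : ∀ y ∈ O, #{g : G | g • x = y} = #{g : G | g • x = x} := by
    intro y hy
    obtain ⟨g₀, rfl⟩ := (hO y).1 hy
    exact card_equiv (Equiv.mulLeft g₀⁻¹) fun g => by simp [mul_smul, inv_smul_eq_iff]
  have hsum : ∑ g : G, f (g • x) = #{g : G | g • x = x} • ∑ y ∈ O, f y := by
    rw [← sum_fiberwise_of_maps_to maps, smul_sum]
    refine sum_congr rfl fun y hy => ?_
    rw [sum_congr rfl fun g hg => congrArg f (mem_filter.1 hg).2, sum_const, ← fiber y hy]
  have hcard : Fintype.card G = #{g : G | g • x = x} * #O := by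
    rw [← card_univ, card_eq_sum_card_fiberwise maps, sum_congr rfl fiber, sum_const, smul_eq_mul,
      mul_comm]
  rw [hsum, hcard, smul_smul, mul_comm]

theorem card_filter_univ_coe {α : Type*} (C : Finset α) (p : α → Prop) [DecidablePred p] :
    #{i : C | p i} = #{i ∈ C | p i} := by
  rw [← attach_eq_univ, filter_attach, card_map, card_attach]

theorem descFactorial_mul_descFactorial_le {a b s t : ℕ} (hab : a ≤ b) (hst : s ≤ t) :
    a.descFactorial t * b.descFactorial s ≤ a.descFactorial s * b.descFactorial t := by
  obtain ⟨d, rfl⟩ := Nat.exists_eq_add_of_le hst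
  induction d with
  | zero => rw [Nat.add_zero, mul_comm]
  | succ d ih =>
    rw [← Nat.add_assoc, Nat.descFactorial_succ, Nat.descFactorial_succ]
    calc (a - (s + d)) * a.descFactorial (s + d) * b.descFactorial s
        = (a - (s + d)) * (a.descFactorial (s + d) * b.descFactorial s) := by ring
      _ ≤ (b - (s + d)) * (a.descFactorial s * b.descFactorial (s + d)) :=
          Nat.mul_le_mul (Nat.sub_le_sub_right hab _) (ih (Nat.le_add_right s d))
      _ = a.descFactorial s * ((b - (s + d)) * b.descFactorial (s + d)) := by ring

theorem sub_mul_descFactorial_sub_nonpos (a b : ℕ) {s t : ℕ} (hst : s ≤ t) :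
    ((b : ℝ) - a) * (a.descFactorial t * b.descFactorial s - a.descFactorial s * b.descFactorial t)
      ≤ 0 := by
  rcases le_total a b with hab | hba
  · refine mul_nonpos_of_nonneg_of_nonpos (by simp [hab]) (sub_nonpos.2 ?_)
    exact_mod_cast descFactorial_mul_descFactorial_le hab hst
  · refine mul_nonpos_of_nonpos_of_nonneg (by simp [hba]) (sub_nonneg.2 ?_)
    rw [mul_comm (a.descFactorial t : ℝ), mul_comm (a.descFactorial s : ℝ)]
    exact_mod_cast descFactorial_mul_descFactorial_le hba hst

section ColoredEmbeddings

variable {ι α : Type*}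

def coloredEmbeddingEquiv (Y : α → Bool) (P : ι → Bool) :
    {e : ι ↪ α // ∀ i, Y (e i) = P i} ≃
      ({i // P i = true} ↪ {x // Y x = true}) × ({i // ¬P i = true} ↪ {x // ¬Y x = true}) where
  toFun e := (e.1.subtypeMap fun i hi => (e.2 i).trans hi, e.1.subtypeMap fun i hi => by rwa [e.2 i])
  invFun p := ⟨(Equiv.sumCompl _).symm.toEmbedding.trans
      ((p.1.sumMap p.2).trans (Equiv.sumCompl _).toEmbedding), fun i => by
    by_cases hi : P i = true
    · simpa [Equiv.sumCompl_symm_apply_of_pos (p := (P · = true)) hi, hi] using (p.1 ⟨i, hi⟩).2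
    · simpa [Equiv.sumCompl_symm_apply_of_neg (p := (P · = true)) hi, hi] using (p.2 ⟨i, hi⟩).2⟩
  left_inv e := by
    ext i
    by_cases hi : P i = true
    · simp [Function.Embedding.subtypeMap, Equiv.sumCompl_symm_apply_of_pos (p := (P · = true)) hi]
    · simp [Function.Embedding.subtypeMap, Equiv.sumCompl_symm_apply_of_neg (p := (P · = true)) hi]
  right_inv p := by
    ext i <;> simp [Function.Embedding.subtypeMap]

variable [Fintype ι] [Fintype α]

theorem card_coloredEmbedding (Y : α → Bool) (P : ι → Bool) :
    #{e : ι ↪ α | ∀ i, Y (e i) = P i} =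
      (#{x | Y x = true}).descFactorial #{i | P i = true} *
        (#{x | Y x = false}).descFactorial #{i | P i = false} := by
  simp only [← Bool.not_eq_true, ← Fintype.card_subtype, ← Fintype.card_embedding_eq,
    ← Fintype.card_prod]
  exact Fintype.card_congr (coloredEmbeddingEquiv Y P)

theorem sum_embedding_eq_sum_pattern [DecidableEq ι] (Y : α → Bool) (G : (ι → Bool) → ℝ) :
    ∑ e : ι ↪ α, G (fun i => Y (e i)) =
      ∑ P : ι → Bool, (((#{x | Y x = true}).descFactorial #{i | P i = true} *
        (#{x | Y x = false}).descFactorial #{i | P i = false} : ℕ) : ℝ) * G P := by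
  rw [← sum_fiberwise' univ (fun e : ι ↪ α => fun i => Y (e i))]
  refine sum_congr rfl fun P _ => ?_
  rw [sum_const, nsmul_eq_mul, ← card_coloredEmbedding]
  simp only [funext_iff]

theorem sum_perm_smul_embedding_nonneg [DecidableEq α] (e₀ : ι ↪ α) {G : (ι ↪ α) → ℝ}
    (hG : 0 ≤ ∑ e, G e) : 0 ≤ ∑ ρ : Equiv.Perm α, G (ρ • e₀) := by
  classical
  have horbit := card_orbit_nsmul_sum_smul_eq (G := Equiv.Perm α) (O := univ)
    (fun e => by simpa using Equiv.Perm.exists_smul_eq_embedding e₀ e) G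
  rw [nsmul_eq_mul, nsmul_eq_mul] at horbit
  have hpos : (0 : ℝ) < #(univ : Finset (ι ↪ α)) := by exact_mod_cast card_pos.2 ⟨e₀, mem_univ _⟩
  exact nonneg_of_mul_nonneg_right (horbit ▸ mul_nonneg (by positivity) hG) hpos

end ColoredEmbeddings

open scoped Pointwise in
theorem choose_mul_sum_perm_image {α : Type*} [Fintype α] [DecidableEq α] (C : Finset α)
    (F : Finset α → ℝ) :
    ((Fintype.card α).choose #C : ℝ) * ∑ ρ : Equiv.Perm α, F (C.image ρ) =
      (Fintype.card α).factorial * ∑ D ∈ powersetCard #C univ, F D := by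
  have hO : ∀ D, D ∈ powersetCard #C univ ↔ ∃ ρ : Equiv.Perm α, ρ • C = D := by
    intro D
    simp only [mem_powersetCard, subset_univ, true_and, smul_finset_def, Equiv.Perm.smul_def]
    refine ⟨fun h => ?_, fun ⟨ρ, hρ⟩ => hρ ▸ card_image_of_injective _ ρ.injective⟩
    obtain ⟨ρ, hρ⟩ := Equiv.Perm.exists_map_finset_eq C D h.symm
    exact ⟨ρ, by rw [← hρ, map_eq_image]; rfl⟩
  have := card_orbit_nsmul_sum_smul_eq hO F
  simp only [smul_finset_def, Equiv.Perm.smul_def, card_powersetCard, card_univ,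
    Fintype.card_perm, nsmul_eq_mul] at this
  exact this

def issueCost (p nTrue nFalse : ℝ) : ℝ := p * nFalse + (1 - p) * nTrue

def majority (k t : ℕ) : ℝ := if k < 2 * t then 1 else if 2 * t < k then 0 else 1 / 2

theorem issueCost_one_sub (p nTrue nFalse : ℝ) :
    issueCost (1 - p) nFalse nTrue = issueCost p nTrue nFalse := by
  unfold issueCost
  ring

theorem majority_sub {k t : ℕ} (ht : t ≤ k) : majority k (k - t) = 1 - majority k t := by
  unfold majority
  split_ifs <;> first | omega | norm_num

/-- The weights count the placements of a committee that produce `t` votes for `true` and `f`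
for `false` when `a` voters favour `true` and `b` favour `false`, resp. in the complemented
world; majority is the decision of the likelihood-ratio test between the two worlds. -/
theorem issueCost_majority_add_le (a b t f : ℕ) {x : ℝ} (hx : x ∈ Set.Icc (0 : ℝ) 1) :
    ((a.descFactorial t * b.descFactorial f : ℕ) : ℝ) * issueCost (majority (t + f) t) a b +
        ((b.descFactorial t * a.descFactorial f : ℕ) : ℝ) * issueCost (majority (t + f) t) b a ≤
      ((a.descFactorial t * b.descFactorial f : ℕ) : ℝ) * issueCost x a b +
        ((b.descFactorial t * a.descFactorial f : ℕ) : ℝ) * issueCost x b a := by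
  have key : ∀ m : ℝ,
      ((a.descFactorial t * b.descFactorial f : ℕ) : ℝ) * issueCost x a b +
        ((b.descFactorial t * a.descFactorial f : ℕ) : ℝ) * issueCost x b a -
      (((a.descFactorial t * b.descFactorial f : ℕ) : ℝ) * issueCost m a b +
        ((b.descFactorial t * a.descFactorial f : ℕ) : ℝ) * issueCost m b a) =
      (x - m) * (((b : ℝ) - a) * (a.descFactorial t * b.descFactorial f -
        a.descFactorial f * b.descFactorial t)) := by
    intro m
    unfold issueCost
    push_cast
    ring
  rw [← sub_nonneg, key]
  unfold majority
  rcases lt_trichotomy f t with hft | rfl | htf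
  · rw [if_pos (by omega)]
    exact mul_nonneg_of_nonpos_of_nonpos (by linarith [hx.2])
      (sub_mul_descFactorial_sub_nonpos a b hft.le)
  · simp
  · rw [if_neg (by omega), if_pos (by omega), sub_zero]
    have := sub_mul_descFactorial_sub_nonpos a b htf.le
    exact mul_nonneg hx.1 (by linarith)

theorem two_mul_sum_embedding_issueCost_majority_le {ι α : Type*} [Fintype ι] [Fintype α]
    [DecidableEq ι] (Y : α → Bool) (q : (ι → Bool) → ℝ) (hq : ∀ P, q P ∈ Set.Icc (0 : ℝ) 1) :
    2 * ∑ e : ι ↪ α, issueCost (majority (Fintype.card ι) #{i | Y (e i) = true})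
        #{x | Y x = true} #{x | Y x = false} ≤
      ∑ e : ι ↪ α, (issueCost (q fun i => Y (e i)) #{x | Y x = true} #{x | Y x = false} +
        issueCost (q fun i => !Y (e i)) #{x | Y x = false} #{x | Y x = true}) := by
  set a := #{x | Y x = true}
  set b := #{x | Y x = false}
  have hsplit : ∀ P : ι → Bool, #{i | P i = true} + #{i | P i = false} = Fintype.card ι := by
    intro P
    simpa using card_filter_add_card_filter_not (s := univ) (fun i => P i = true)
  have hnot : #{x | (!Y x) = true} = b ∧ #{x | (!Y x) = false} = a := by simp [a, b]
  have hmaj : ∀ e : ι ↪ α, 2 * issueCost (majority (Fintype.card ι) #{i | Y (e i) = true}) a b =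
      issueCost (majority (Fintype.card ι) #{i | Y (e i) = true}) a b +
        issueCost (majority (Fintype.card ι) #{i | (!Y (e i)) = true}) b a := by
    intro e
    have := hsplit fun i => Y (e i)
    have hcompl : #{i | (!Y (e i)) = true} = Fintype.card ι - #{i | Y (e i) = true} := by
      simp only [Bool.not_eq_true']
      omega
    rw [hcompl, majority_sub (by omega), issueCost_one_sub]
    ring
  rw [mul_sum, sum_congr rfl fun e _ => hmaj e, sum_add_distrib, sum_add_distrib,
    sum_embedding_eq_sum_pattern Y fun P => issueCost (majority _ #{i | P i = true}) a b,
    sum_embedding_eq_sum_pattern (!Y ·) fun P => issueCost (majority _ #{i | P i = true}) b a,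
    sum_embedding_eq_sum_pattern Y fun P => issueCost (q P) a b,
    sum_embedding_eq_sum_pattern (!Y ·) fun P => issueCost (q P) b a,
    hnot.1, hnot.2, ← sum_add_distrib, ← sum_add_distrib]
  refine sum_le_sum fun P _ => ?_
  rw [← hsplit P]
  exact issueCost_majority_add_le a b _ _ (hq P)

theorem two_mul_sum_perm_issueCost_majority_le {α : Type*} [Fintype α] [DecidableEq α]
    (C : Finset α) (Y : α → Bool) (q : (α → Bool) → ℝ) (hq : ∀ v, q v ∈ Set.Icc (0 : ℝ) 1)
    (hloc : ∀ v v', (∀ i ∈ C, v i = v' i) → q v = q v') :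
    2 * ∑ ρ : Equiv.Perm α, issueCost (majority #C #{i ∈ C | Y (ρ i) = true})
        #{x | Y x = true} #{x | Y x = false} ≤
      ∑ ρ : Equiv.Perm α, (issueCost (q fun i => Y (ρ i)) #{x | Y x = true} #{x | Y x = false} +
        issueCost (q fun i => !Y (ρ i)) #{x | Y x = false} #{x | Y x = true}) := by
  set a := #{x | Y x = true}
  set b := #{x | Y x = false}
  let e₀ : C ↪ α := Function.Embedding.subtype _
  let q' : (C → Bool) → ℝ := fun P => q fun x => if h : x ∈ C then P ⟨x, h⟩ else false
  have hq' : ∀ v, q' (fun i => v i) = q v := fun v => hloc _ _ fun i hi => by simp [hi]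
  let G : (C ↪ α) → ℝ := fun e => issueCost (q' fun i => Y (e i)) a b +
    issueCost (q' fun i => !Y (e i)) b a - 2 * issueCost (majority #C #{i | Y (e i) = true}) a b
  have hG : 0 ≤ ∑ e, G e := by
    have := two_mul_sum_embedding_issueCost_majority_le Y q' fun P => hq _
    rw [Fintype.card_coe] at this
    simp only [G, sum_sub_distrib, ← mul_sum]
    linarith
  have hGρ : ∀ ρ : Equiv.Perm α, G (ρ • e₀) =
      issueCost (q fun i => Y (ρ i)) a b + issueCost (q fun i => !Y (ρ i)) b a -
        2 * issueCost (majority #C #{i ∈ C | Y (ρ i) = true}) a b := by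
    intro ρ
    have hcard : #{i | Y ((ρ • e₀) i) = true} = #{i ∈ C | Y (ρ i) = true} :=
      card_filter_univ_coe C fun i => Y (ρ i) = true
    rw [← hq', ← hq', ← hcard]
    rfl
  have := sum_perm_smul_embedding_nonneg e₀ hG
  simp only [hGρ, sum_sub_distrib, ← mul_sum] at this
  linarith

theorem trueCount_add_falseCount {n m : ℕ} (X : Fin n → Fin m → Bool) (j : Fin m) :
    trueCount X j + falseCount X j = n := by
  simpa [trueCount, falseCount] using card_filter_add_card_filter_not (s := univ) (X · j = true)

theorem sortitionCost_eq (k : ℕ) {n m : ℕ} (X : Fin n → Fin m → Bool) :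
    sortitionCost k X = (∑ C ∈ powersetCard k univ, ∑ j, issueCost
      (majority k #{i ∈ C | X i j = true}) (trueCount X j) (falseCount X j)) / n.choose k := by
  unfold sortitionCost
  congr 1
  refine sum_congr rfl fun C _ => sum_congr rfl fun j _ => ?_
  have hn : ((trueCount X j + falseCount X j : ℕ) : ℝ) = n := by rw [trueCount_add_falseCount]
  push_cast at hn
  unfold majority issueCost
  split_ifs
  · ring
  · ring
  · linear_combination (-1 / 2 : ℝ) * hn

theorem sum_perm_issueCost_majority {n k : ℕ} (hkn : k ≤ n) (Y : Fin n → Fin 1 → Bool)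
    (C : Finset (Fin n)) (hC : #C = k) :
    ∑ ρ : Equiv.Perm (Fin n), issueCost (majority k #{i ∈ C | Y (ρ i) 0 = true})
        (trueCount Y 0) (falseCount Y 0) = n.factorial * sortitionCost k Y := by
  have := choose_mul_sum_perm_image C
    fun D => issueCost (majority k #{i ∈ D | Y i 0 = true}) (trueCount Y 0) (falseCount Y 0)
  have himage : ∀ ρ : Equiv.Perm (Fin n),
      #{i ∈ C.image ρ | Y i 0 = true} = #{i ∈ C | Y (ρ i) 0 = true} := fun ρ => by
    rw [filter_image, card_image_of_injective _ ρ.injective]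
  simp only [himage, hC, Fintype.card_fin] at this
  have hchoose : (0 : ℝ) < n.choose k := by exact_mod_cast Nat.choose_pos hkn
  rw [sortitionCost_eq]
  simp only [Fin.sum_univ_one]
  rw [mul_div_assoc', eq_div_iff hchoose.ne', ← this]
  ring

theorem SC_eq_sum {n m : ℕ} (X : Fin n → Fin m → Bool) (z : Fin m → Bool) :
    SC X z = ∑ j, if z j = true then falseCount X j else trueCount X j := by
  simp only [SC, hamming, card_filter]
  rw [sum_comm]
  refine sum_congr rfl fun j _ => ?_
  rw [← card_filter]
  cases z j <;> simp [trueCount, falseCount]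

theorem optCost_eq_sum_min {n m : ℕ} (X : Fin n → Fin m → Bool) :
    optCost X = ∑ j, min (trueCount X j) (falseCount X j) := by
  refine le_antisymm ?_ (le_inf' _ _ fun z _ => ?_)
  · refine (inf'_le _ (mem_univ fun j => decide (falseCount X j < trueCount X j))).trans_eq ?_
    rw [SC_eq_sum]
    refine sum_congr rfl fun j _ => ?_
    by_cases hj : falseCount X j < trueCount X j
    · simp [hj, hj.le]
    · simp [hj, not_lt.1 hj]
  · rw [SC_eq_sum]
    refine sum_le_sum fun j _ => ?_
    split_ifs
    exacts [min_le_right _ _, min_le_left _ _]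

theorem ratio_le_ratio {c c' : ℝ} {o N : ℕ} (hN : 0 < N) (hc : N * c ≤ c') :
    ratio c o ≤ ratio c' (N * o) := by
  unfold ratio
  rcases eq_or_ne o 0 with ho | ho
  · simp [ho]
  rw [if_neg ho, if_neg (mul_ne_zero hN.ne' ho), Nat.cast_mul, ← div_div,
    div_le_div_iff_of_pos_right (by positivity), le_div_iff₀ (by positivity), mul_comm]
  exact hc

def issuePerm (n : ℕ) : Fin n.factorial ≃ Equiv.Perm (Fin n) :=
  (Fintype.equivFinOfCardEq (by rw [Fintype.card_perm, Fintype.card_fin])).symm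

def permProfile {n : ℕ} (v : Fin n → Bool) (π : Equiv.Perm (Fin n)) :
    Fin n → Fin n.factorial → Bool :=
  fun i j => v (issuePerm n j (π i))

section PermProfile

variable {n : ℕ} (v : Fin n → Bool) (π : Equiv.Perm (Fin n))

theorem hamming_permProfile (i i' : Fin n) :
    hamming (permProfile v π i) (permProfile v π i') =
      #{ρ : Equiv.Perm (Fin n) | v (ρ i) ≠ v (ρ i')} := by
  unfold hamming permProfile
  exact card_equiv ((issuePerm n).trans (Equiv.mulRight π)) fun j => by simp

theorem hamming_permProfile_not (i i' : Fin n) :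
    hamming (permProfile (!v ·) π i) (permProfile (!v ·) π i') =
      hamming (permProfile v 1 i) (permProfile v 1 i') := by
  simp [hamming_permProfile]

theorem trueCount_permProfile (j : Fin n.factorial) :
    trueCount (permProfile v π) j = #{x | v x = true} :=
  card_equiv (π.trans (issuePerm n j)) fun i => by simp only [mem_filter, mem_univ, true_and]; rfl

theorem falseCount_permProfile (j : Fin n.factorial) :
    falseCount (permProfile v π) j = #{x | v x = false} :=
  card_equiv (π.trans (issuePerm n j)) fun i => by simp only [mem_filter, mem_univ, true_and]; rfl

theorem optCost_permProfile :
    optCost (permProfile v π) = n.factorial * min #{x | v x = true} #{x | v x = false} := by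
  simp [optCost_eq_sum_min, trueCount_permProfile, falseCount_permProfile]

theorem genCost_permProfile
    {μ : (Fin n → Fin n.factorial → Bool) → Finset (Fin n) → ℝ}
    {h : (Fin n → Fin n.factorial → Bool) → Finset (Fin n) → Fin n.factorial →
      (Fin n → Bool) → ℝ}
    {X₀ : Fin n → Fin n.factorial → Bool}
    (hμ : μ (permProfile v π) = μ X₀) (hh : h (permProfile v π) = h X₀) :
    genCost μ h (permProfile v π) = ∑ C, μ X₀ C * ∑ j, issueCost
      (h X₀ C j fun i => v (issuePerm n j (π i))) #{x | v x = true} #{x | v x = false} := by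
  simp only [genCost, hμ, hh, trueCount_permProfile, falseCount_permProfile]
  rfl

end PermProfile

structure IsDistanceBasedCommitteeRule {n m : ℕ} (k : ℕ)
    (μ : (Fin n → Fin m → Bool) → Finset (Fin n) → ℝ)
    (h : (Fin n → Fin m → Bool) → Finset (Fin n) → Fin m → (Fin n → Bool) → ℝ) : Prop where
  prob_nonneg : ∀ X C, 0 ≤ μ X C
  sum_prob_eq_one : ∀ X, ∑ C, μ X C = 1
  card_eq_of_prob_ne_zero : ∀ X C, μ X C ≠ 0 → #C = k
  vote_mem_Icc : ∀ X C j v, h X C j v ∈ Set.Icc (0 : ℝ) 1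
  vote_eq_of_eqOn : ∀ X C j v v', (∀ i ∈ C, v i = v' i) → h X C j v = h X C j v'
  prob_eq_of_hamming_eq :
    ∀ X X', (∀ i i', hamming (X i) (X i') = hamming (X' i) (X' i')) → μ X = μ X'
  vote_eq_of_hamming_eq :
    ∀ X X', (∀ i i', hamming (X i) (X i') = hamming (X' i) (X' i')) → h X = h X'

namespace IsDistanceBasedCommitteeRule

variable {n k : ℕ} {μ : (Fin n → Fin n.factorial → Bool) → Finset (Fin n) → ℝ}
  {h : (Fin n → Fin n.factorial → Bool) → Finset (Fin n) → Fin n.factorial → (Fin n → Bool) → ℝ}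

theorem sum_genCost_permProfile (hrule : IsDistanceBasedCommitteeRule k μ h)
    (Y : Fin n → Fin 1 → Bool) :
    ∑ π, (genCost μ h (permProfile (Y · 0) π) + genCost μ h (permProfile (!Y · 0) π)) =
      ∑ C, μ (permProfile (Y · 0) 1) C * ∑ j, ∑ ρ : Equiv.Perm (Fin n),
        (issueCost (h (permProfile (Y · 0) 1) C j fun i => Y (ρ i) 0)
            (trueCount Y 0) (falseCount Y 0) +
          issueCost (h (permProfile (Y · 0) 1) C j fun i => !Y (ρ i) 0)
            (falseCount Y 0) (trueCount Y 0)) := by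
  have hdist : ∀ π i i', hamming (permProfile (Y · 0) π i) (permProfile (Y · 0) π i') =
      hamming (permProfile (Y · 0) 1 i) (permProfile (Y · 0) 1 i') := fun π i i' => by
    simp only [hamming_permProfile]
  have hdist' := hamming_permProfile_not (Y · 0)
  have hnot : #{x | (!Y x 0) = true} = falseCount Y 0 ∧
      #{x | (!Y x 0) = false} = trueCount Y 0 := by
    simp [trueCount, falseCount]
  simp only [genCost_permProfile _ _ (hrule.prob_eq_of_hamming_eq _ _ (hdist _))
      (hrule.vote_eq_of_hamming_eq _ _ (hdist _)),
    genCost_permProfile _ _ (hrule.prob_eq_of_hamming_eq _ _ (hdist' _))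
      (hrule.vote_eq_of_hamming_eq _ _ (hdist' _)),
    hnot, ← sum_add_distrib, ← mul_add]
  rw [sum_comm]
  refine sum_congr rfl fun C _ => ?_
  rw [← mul_sum]
  refine congrArg _ ?_
  conv_lhs => rw [sum_comm]
  exact sum_congr rfl fun j _ => Fintype.sum_equiv (Equiv.mulLeft (issuePerm n j)) _ _ fun _ => rfl

theorem le_sum_genCost_permProfile (hrule : IsDistanceBasedCommitteeRule k μ h) (hkn : k ≤ n)
    (Y : Fin n → Fin 1 → Bool) :
    ∑ _π : Equiv.Perm (Fin n), 2 * (n.factorial * sortitionCost k Y) ≤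
      ∑ π, (genCost μ h (permProfile (Y · 0) π) + genCost μ h (permProfile (!Y · 0) π)) := by
  rw [hrule.sum_genCost_permProfile]
  set X₀ := permProfile (Y · 0) 1
  have hcommittee : ∀ C, μ X₀ C ≠ 0 → ∀ j, 2 * (n.factorial * sortitionCost k Y) ≤
      ∑ ρ : Equiv.Perm (Fin n), (issueCost (h X₀ C j fun i => Y (ρ i) 0) (trueCount Y 0)
        (falseCount Y 0) + issueCost (h X₀ C j fun i => !Y (ρ i) 0) (falseCount Y 0)
          (trueCount Y 0)) := by
    intro C hC j
    have hCk := hrule.card_eq_of_prob_ne_zero _ _ hC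
    have := two_mul_sum_perm_issueCost_majority_le C (Y · 0) (h X₀ C j)
      (hrule.vote_mem_Icc X₀ C j) (hrule.vote_eq_of_eqOn X₀ C j)
    rw [hCk] at this
    rw [← sum_perm_issueCost_majority hkn Y C hCk]
    exact this
  calc ∑ _π : Equiv.Perm (Fin n), 2 * (n.factorial * sortitionCost k Y)
      = ∑ C, μ X₀ C * ∑ j : Fin n.factorial, 2 * (n.factorial * sortitionCost k Y) := by
        simp only [sum_const, card_univ, Fintype.card_perm, Fintype.card_fin, nsmul_eq_mul,
          ← sum_mul, hrule.sum_prob_eq_one, one_mul]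
    _ ≤ _ := by
        refine sum_le_sum fun C _ => ?_
        rcases eq_or_ne (μ X₀ C) 0 with hC | hC
        · simp [hC]
        · exact mul_le_mul_of_nonneg_left (sum_le_sum fun j _ => hcommittee C hC j)
            (hrule.prob_nonneg _ _)

theorem exists_optCost_eq_and_le_genCost (hrule : IsDistanceBasedCommitteeRule k μ h)
    (hkn : k ≤ n) (Y : Fin n → Fin 1 → Bool) :
    ∃ X, optCost X = n.factorial * optCost Y ∧ n.factorial * sortitionCost k Y ≤ genCost μ h X := by
  obtain ⟨π, -, hπ⟩ := exists_le_of_sum_le univ_nonempty (hrule.le_sum_genCost_permProfile hkn Y)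
  have hopt : optCost Y = min (trueCount Y 0) (falseCount Y 0) := by
    simp [optCost_eq_sum_min]
  by_cases hle : n.factorial * sortitionCost k Y ≤ genCost μ h (permProfile (Y · 0) π)
  · exact ⟨_, by rw [optCost_permProfile, hopt]; rfl, hle⟩
  · refine ⟨permProfile (!Y · 0) π, ?_, by linarith⟩
    rw [optCost_permProfile, hopt, min_comm]
    simp [trueCount, falseCount]

end IsDistanceBasedCommitteeRule

theorem stmt19_general (n k : ℕ) (hkn : k ≤ n)
    (μ : (Fin n → Fin n.factorial → Bool) → Finset (Fin n) → ℝ)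
    (h : (Fin n → Fin n.factorial → Bool) → Finset (Fin n) → Fin n.factorial →
          (Fin n → Bool) → ℝ)
    (hμ0 : ∀ X C, 0 ≤ μ X C)
    (hμ1 : ∀ X, ∑ C : Finset (Fin n), μ X C = 1)
    (hμk : ∀ X C, μ X C ≠ 0 → C.card = k)
    (hrange : ∀ X C j v, h X C j v ∈ Set.Icc (0 : ℝ) 1)
    (hlocal : ∀ X C j v v', (∀ i ∈ C, v i = v' i) → h X C j v = h X C j v')
    (hdistμ : ∀ X X', (∀ i i', hamming (X i) (X i') = hamming (X' i) (X' i')) → μ X = μ X')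
    (hdisth : ∀ X X', (∀ i i', hamming (X i) (X i') = hamming (X' i) (X' i')) → h X = h X') :
    sortitionAR n 1 k ≤
      ⨆ X : Fin n → Fin n.factorial → Bool, ratio (genCost μ h X) (optCost X) := by
  have hrule : IsDistanceBasedCommitteeRule k μ h :=
    ⟨hμ0, hμ1, hμk, hrange, hlocal, hdistμ, hdisth⟩
  refine ciSup_le fun Y => ?_
  obtain ⟨X, hXopt, hXcost⟩ := hrule.exists_optCost_eq_and_le_genCost hkn Y
  calc ratio (sortitionCost k Y) (optCost Y)
      ≤ ratio (genCost μ h X) (optCost X) := hXopt ▸ ratio_le_ratio (Nat.factorial_pos n) hXcost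
    _ ≤ ⨆ X, ratio (genCost μ h X) (optCost X) :=
        le_ciSup (f := fun X => ratio (genCost μ h X) (optCost X)) (Set.finite_range _).bddAbove X

theorem stmt19 (n k : ℕ) (hk : 1 ≤ k) (hkn : k ≤ n) (hn : 2 ≤ n)
    (μ : (Fin n → Fin n.factorial → Bool) → Finset (Fin n) → ℝ)
    (h : (Fin n → Fin n.factorial → Bool) → Finset (Fin n) → Fin n.factorial →
          (Fin n → Bool) → ℝ)
    (hμ0 : ∀ X C, 0 ≤ μ X C)
    (hμ1 : ∀ X, ∑ C : Finset (Fin n), μ X C = 1)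
    (hμk : ∀ X C, μ X C ≠ 0 → C.card = k)
    (hrange : ∀ X C j v, h X C j v ∈ Set.Icc (0 : ℝ) 1)
    (hlocal : ∀ X C j v v', (∀ i ∈ C, v i = v' i) → h X C j v = h X C j v')
    (hdistμ : ∀ X X', (∀ i i', hamming (X i) (X i') = hamming (X' i) (X' i')) → μ X = μ X')
    (hdisth : ∀ X X', (∀ i i', hamming (X i) (X i') = hamming (X' i) (X' i')) → h X = h X') :
    sortitionAR n 1 k ≤
      ⨆ X : Fin n → Fin n.factorial → Bool, ratio (genCost μ h X) (optCost X) :=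
  stmt19_general n k hkn μ h hμ0 hμ1 hμk hrange hlocal hdistμ hdisth

end
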